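/- arXiv:1604.00457 — 4 statements merged into one kernel-verified Lean document; each statement's English description precedes it below -/
import Mathlib

section
/- Let α > β γ² > 0 with γ > 0. If real numbers F_i, e_i (i = 1..n) satisfy Σᵢ eᵢ² ≤ γ² Σᵢ Fᵢ² and constants λᵢ satisfy α/(1-c/2) ≤ λᵢ ≤ 2cβ with 0 < c < 2, then -Σᵢ λᵢ (Fᵢ² - eᵢFᵢ) ≤ -(α - βγ²) Σᵢ Fᵢ². -/
open Finset

/-
Young's inequality `e F ≤ (c/2) F² + e²/(2c)` turns each term into
`-λᵢ (Fᵢ² - eᵢFᵢ) ≤ -(1 - c/2) λᵢ Fᵢ² + λᵢ/(2c) eᵢ² ≤ -α Fᵢ² + β eᵢ²`; summing and using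
`Σ eᵢ² ≤ γ² Σ Fᵢ²` gives the bound.
-/

lemma mul_le_half_mul_sq_add_sq_div {c : ℝ} (hc : 0 < c) (x y : ℝ) :
    y * x ≤ c / 2 * x ^ 2 + y ^ 2 / (2 * c) := by
  have key : 0 ≤ (c * x - y) ^ 2 / (2 * c) := by positivity
  have expand : (c * x - y) ^ 2 / (2 * c) = c / 2 * x ^ 2 + y ^ 2 / (2 * c) - y * x := by
    field_simp
    ring
  linarith

lemma neg_mul_sq_sub_mul_le {c l α β : ℝ} (hc : 0 < c) (hl : 0 ≤ l)
    (hα : α ≤ (1 - c / 2) * l) (hβ : l / (2 * c) ≤ β) (x y : ℝ) :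
    -(l * (x ^ 2 - y * x)) ≤ -α * x ^ 2 + β * y ^ 2 :=
  calc -(l * (x ^ 2 - y * x)) = -l * x ^ 2 + l * (y * x) := by ring
    _ ≤ -l * x ^ 2 + l * (c / 2 * x ^ 2 + y ^ 2 / (2 * c)) := by
      gcongr
      exact mul_le_half_mul_sq_add_sq_div hc x y
    _ = -((1 - c / 2) * l) * x ^ 2 + l / (2 * c) * y ^ 2 := by ring
    _ ≤ -α * x ^ 2 + β * y ^ 2 := by gcongr

lemma neg_sum_mul_sq_sub_mul_le {ι : Type*} [Fintype ι] {c α β : ℝ} {l : ι → ℝ} (hc : 0 < c)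
    (hl : ∀ i, 0 ≤ l i) (hα : ∀ i, α ≤ (1 - c / 2) * l i) (hβ : ∀ i, l i / (2 * c) ≤ β)
    (x y : ι → ℝ) :
    -∑ i, l i * (x i ^ 2 - y i * x i) ≤ -α * ∑ i, x i ^ 2 + β * ∑ i, y i ^ 2 :=
  calc -∑ i, l i * (x i ^ 2 - y i * x i) = ∑ i, -(l i * (x i ^ 2 - y i * x i)) :=
        (sum_neg_distrib _).symm
    _ ≤ ∑ i, (-α * x i ^ 2 + β * y i ^ 2) :=
        sum_le_sum fun i _ ↦ neg_mul_sq_sub_mul_le hc (hl i) (hα i) (hβ i) (x i) (y i)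
    _ = -α * ∑ i, x i ^ 2 + β * ∑ i, y i ^ 2 := by
        rw [sum_add_distrib, ← mul_sum, ← mul_sum]

theorem lyapunov_derivative_bound_general (n : ℕ) (c α β γ : ℝ) (lam F e : Fin n → ℝ)
    (hc : 0 < c)
    (hβγ : 0 < β * γ ^ 2)
    (hlam : ∀ i, 0 < lam i)
    (hα : ∀ i, α ≤ (1 - c / 2) * lam i)
    (hβ : ∀ i, lam i / (2 * c) ≤ β)
    (he : ∑ i, e i ^ 2 ≤ γ ^ 2 * ∑ i, F i ^ 2) :
    -∑ i, lam i * (F i ^ 2 - e i * F i) ≤ -(α - β * γ ^ 2) * ∑ i, F i ^ 2 := by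
  have hβ₀ : 0 ≤ β := (pos_of_mul_pos_left hβγ (sq_nonneg γ)).le
  calc -∑ i, lam i * (F i ^ 2 - e i * F i)
      ≤ -α * ∑ i, F i ^ 2 + β * ∑ i, e i ^ 2 :=
        neg_sum_mul_sq_sub_mul_le hc (fun i ↦ (hlam i).le) hα hβ F e
    _ ≤ -α * ∑ i, F i ^ 2 + β * (γ ^ 2 * ∑ i, F i ^ 2) := by gcongr
    _ = -(α - β * γ ^ 2) * ∑ i, F i ^ 2 := by ring

theorem lyapunov_derivative_bound (n : ℕ) (c α β γ : ℝ) (lam F e : Fin n → ℝ)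
    (hc : 0 < c) (hc2 : c < 2) (hγ : 0 < γ)
    (hαβγ : β * γ ^ 2 < α) (hβγ : 0 < β * γ ^ 2)
    (hlam : ∀ i, 0 < lam i)
    (hα : ∀ i, α ≤ (1 - c / 2) * lam i)
    (hβ : ∀ i, lam i / (2 * c) ≤ β)
    (he : ∑ i, e i ^ 2 ≤ γ ^ 2 * ∑ i, F i ^ 2) :
    -∑ i, lam i * (F i ^ 2 - e i * F i) ≤ -(α - β * γ ^ 2) * ∑ i, F i ^ 2 :=
  lyapunov_derivative_bound_general n c α β γ lam F e hc hβγ hlam hα hβ he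
end

section
/- If H : ℝⁿ → ℝ is real-analytic and its critical set S is contained in a compact set K, then the set of critical values H(S) is finite. -/
/-!
The Łojasiewicz inequality `|H x - H xₛ| ^ v ≤ ‖∇H x‖` forces `H x = H xₛ` at every critical
point `x` near a critical point `xₛ`, so `H` is locally constant on the critical set. That set is
closed (since `∇H` is continuous) inside the compact `K`, hence compact, and a locally constant
function on a compact set takes finitely many values.
-/

open Filter Topology Metric

theorem IsCompact.finite_image_of_eventually_eq {X Y : Type*} [TopologicalSpace X] {s : Set X}
    (hs : IsCompact s) {f : X → Y} (hf : ∀ x ∈ s, ∀ᶠ y in 𝓝[s] x, f y = f x) :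
    (f '' s).Finite := by
  have : CompactSpace s := isCompact_iff_compactSpace.mp hs
  have hloc : IsLocallyConstant (s.domRestrict f) := (IsLocallyConstant.iff_eventually_eq _).mpr
    fun x => by
      rw [nhds_subtype_eq_comap_nhdsWithin]
      exact (hf x x.2).comap Subtype.val
  rw [← Set.range_domRestrict]
  exact hloc.range_finite

theorem eventually_nhdsWithin_critical_eq_of_lojasiewicz {E : Type*} [NormedAddCommGroup E]
    [NormedSpace ℝ E] {f : E → ℝ} {x₀ : E} {r v : ℝ} (hr : 0 < r) (hv : 0 < v)
    (hloj : ∀ x ∈ ball x₀ r, |f x - f x₀| ^ v ≤ ‖fderiv ℝ f x‖) :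
    ∀ᶠ x in 𝓝[{x | fderiv ℝ f x = 0}] x₀, f x = f x₀ := by
  filter_upwards [mem_nhdsWithin_of_mem_nhds (ball_mem_nhds x₀ hr), self_mem_nhdsWithin]
    with x hx hcrit
  have hle := hloj x hx
  rw [Set.mem_ofPred_eq.mp hcrit, norm_zero] at hle
  have hzero : |f x - f x₀| ^ v = 0 := le_antisymm hle (by positivity)
  rw [Real.rpow_eq_zero (abs_nonneg _) hv.ne', abs_eq_zero, sub_eq_zero] at hzero
  exact hzero

theorem critical_values_finite (n : ℕ) (H : (Fin n → ℝ) → ℝ)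
    (hH : AnalyticOn ℝ H Set.univ)
    (S : Set (Fin n → ℝ)) (hS : S = {x | fderiv ℝ H x = 0})
    (K : Set (Fin n → ℝ)) (hK : IsCompact K) (hSK : S ⊆ K)
    (hLoj : ∀ xs ∈ S, ∃ r > (0:ℝ), ∃ v ∈ Set.Ioo (0:ℝ) 1,
      ∀ x ∈ Metric.ball xs r, |H x - H xs| ^ v ≤ ‖fderiv ℝ H x‖) :
    (H '' S).Finite := by
  subst hS
  have hcont : Continuous (fderiv ℝ H) :=
    continuousOn_univ.mp (analyticOn_univ.mp hH).fderiv.continuousOn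
  have hcompact : IsCompact {x | fderiv ℝ H x = 0} :=
    hK.of_isClosed_subset (isClosed_eq hcont continuous_const) hSK
  refine hcompact.finite_image_of_eventually_eq fun xs hxs => ?_
  obtain ⟨r, hr, v, hv, hloj⟩ := hLoj xs hxs
  exact eventually_nhdsWithin_critical_eq_of_lojasiewicz hr hv.1 hloj
end

section
/- Suppose e : [t_k, ∞) → ℝ is absolutely continuous with e(t_k) = 0 and |ė(t)| ≤ M·√(δ(t)) for all t, where √(δ(s))/√(δ(t')) ≤ √σ·e^{d_max T} for all s ≤ t' in [t_k, t_k + T]. If t' ∈ [t_k, t_k+T] is the first time with |e(t')| = γ·√(δ(t'))·e^{-d(t'-t_k)} for some γ > 0 and 0 < d ≤ d_max, then t' - t_k ≥ η where η is the unique positive solution of γ·e^{-dη}/(M√σ·e^{d_max T}) = η. -/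
/-!
On `[t_k, t']` the ratio bound turns `|ė(t)| ≤ M √δ(t)` into `|ė| ≤ K √δ(t')` with
`K = M √σ e^{d_max T}`, so the mean value inequality and `e(t_k) = 0` give
`γ √δ(t') e^{-d(t' - t_k)} = |e(t')| ≤ K √δ(t') (t' - t_k)`. Cancelling `√δ(t')` shows that
`g(τ) = γ e^{-dτ} / K` satisfies `g(t' - t_k) ≤ t' - t_k`; since `g` is antitone and `η` is its
fixed point, `η ≤ t' - t_k`.
-/

open Real

theorem le_of_antitone_of_apply_eq_of_apply_le {α : Type*} [LinearOrder α] {g : α → α}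
    {η τ : α} (hg : Antitone g) (hη : g η = η) (hτ : g τ ≤ τ) : η ≤ τ := by
  by_contra! hlt
  exact hlt.not_ge <| calc
    η = g η := hη.symm
    _ ≤ g τ := hg hlt.le
    _ ≤ τ := hτ

theorem antitone_mul_exp_neg_mul_div {γ d K : ℝ} (hγ : 0 ≤ γ) (hd : 0 ≤ d) (hK : 0 ≤ K) :
    Antitone fun x => γ * exp (-d * x) / K := by
  intro a b hab
  have : exp (-d * b) ≤ exp (-d * a) := exp_le_exp.mpr (by nlinarith)
  dsimp only
  gcongr

theorem inter_event_lower_bound_general (M σ T γ d dmax tk t' η : ℝ)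
    (hM : 0 < M) (hσ : 0 < σ) (hγ : 0 < γ)
    (hd : 0 < d)
    (δ : ℝ → ℝ) (hδ : ∀ t, 0 < δ t)
    (hratio : ∀ s t₁, tk ≤ s → s ≤ t₁ → t₁ ≤ tk + T →
      Real.sqrt (δ s) / Real.sqrt (δ t₁) ≤ Real.sqrt σ * Real.exp (dmax * T))
    (e e' : ℝ → ℝ) (he0 : e tk = 0)
    (he : ∀ t, HasDerivAt e (e' t) t)
    (he' : ∀ t, |e' t| ≤ M * Real.sqrt (δ t))
    (ht' : tk ≤ t' ∧ t' ≤ tk + T ∧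
      |e t'| = γ * Real.sqrt (δ t') * Real.exp (-d * (t' - tk)))
    (hη : 0 < η ∧ γ * Real.exp (-d * η) / (M * Real.sqrt σ * Real.exp (dmax * T)) = η) :
    η ≤ t' - tk := by
  obtain ⟨htk, htT, hevent⟩ := ht'
  set K := M * sqrt σ * exp (dmax * T)
  have hK : 0 < K := by positivity
  have hδt' : 0 < sqrt (δ t') := sqrt_pos.mpr (hδ t')
  have hderiv : ∀ x ∈ Set.Ico tk t', ‖e' x‖ ≤ K * sqrt (δ t') := by
    intro x hx
    have hsqrt : sqrt (δ x) ≤ sqrt σ * exp (dmax * T) * sqrt (δ t') :=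
      (div_le_iff₀ hδt').mp (hratio x t' hx.1 hx.2.le htT)
    calc ‖e' x‖ ≤ M * sqrt (δ x) := he' x
      _ ≤ M * (sqrt σ * exp (dmax * T) * sqrt (δ t')) := by gcongr
      _ = _ := by ring
  have hgrowth : |e t'| ≤ K * sqrt (δ t') * (t' - tk) := by
    simpa [he0] using norm_image_sub_le_of_norm_deriv_le_segment'
      (fun x _ => (he x).hasDerivWithinAt) hderiv t' (Set.right_mem_Icc.mpr htk)
  have htrigger : γ * exp (-d * (t' - tk)) / K ≤ t' - tk := by
    rw [div_le_iff₀ hK]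
    refine le_of_mul_le_mul_right ?_ hδt'
    linarith
  exact le_of_antitone_of_apply_eq_of_apply_le
    (antitone_mul_exp_neg_mul_div hγ.le hd.le hK.le) hη.2 htrigger

theorem inter_event_lower_bound (M σ T γ d dmax tk t' η : ℝ)
    (hM : 0 < M) (hσ : 0 < σ) (hT : 0 < T) (hγ : 0 < γ)
    (hd : 0 < d) (hdmax : d ≤ dmax)
    (δ : ℝ → ℝ) (hδ : ∀ t, 0 < δ t)
    (hratio : ∀ s t₁, tk ≤ s → s ≤ t₁ → t₁ ≤ tk + T →
      Real.sqrt (δ s) / Real.sqrt (δ t₁) ≤ Real.sqrt σ * Real.exp (dmax * T))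
    (e e' : ℝ → ℝ) (he0 : e tk = 0)
    (he : ∀ t, HasDerivAt e (e' t) t)
    (he' : ∀ t, |e' t| ≤ M * Real.sqrt (δ t))
    (ht' : tk ≤ t' ∧ t' ≤ tk + T ∧
      |e t'| = γ * Real.sqrt (δ t') * Real.exp (-d * (t' - tk)))
    (hη : 0 < η ∧ γ * Real.exp (-d * η) / (M * Real.sqrt σ * Real.exp (dmax * T)) = η) :
    η ≤ t' - tk :=
  inter_event_lower_bound_general M σ T γ d dmax tk t' η hM hσ hγ hd δ hδ hratio e e' he0 he he' ht'
    hη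
end

section
/- Let L(x) = f(g(Λx)) + Σᵢ (dᵢ/λᵢ) ∫₀^{gᵢ(λᵢxᵢ)} gᵢ⁻¹(s) ds - θᵀ g(Λx), where f is C¹, gᵢ is the sigmoid, dᵢ, λᵢ > 0. Then the partial derivative satisfies ∂L/∂xᵢ (x) = λᵢ gᵢ'(λᵢxᵢ)·(dᵢ xᵢ + [∇f(g(Λx))]ᵢ - θᵢ); in particular ∇L(x) = 0 at every equilibrium x with -Dx - ∇f(g(Λx)) + θ = 0. -/
/-!
Moving only the `i`-th coordinate changes only the `i`-th activation `σ(λᵢ xᵢ)`, so every term of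
`L` is differentiated by the chain rule with the common factor `λᵢ σ'(λᵢ xᵢ)`. For the integral term
the fundamental theorem of calculus contributes the integrand `logit` at the upper limit, and
`logit (σ z) = z` turns `(dᵢ / λᵢ) · logit (σ(λᵢ xᵢ)) · λᵢ` into `dᵢ xᵢ`. The logit is interval integrable on
all of `ℝ`, being `log s - log (1 - s)` off `s = 1`.
-/

open Real Function MeasureTheory

noncomputable def logit (s : ℝ) : ℝ := log (s / (1 - s))

lemma logit_sigmoid (x : ℝ) : logit (sigmoid x) = x := by
  have h : sigmoid x / (1 - sigmoid x) = exp x := by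
    rw [← sigmoid_neg, ← sigmoid_mul_rexp_neg x, div_mul_cancel_left₀ (sigmoid_pos x).ne',
      ← exp_neg, neg_neg]
  rw [logit, h, log_exp]

lemma logit_eq_log_sub_log {s : ℝ} (hs : s ≠ 1) : logit s = log s - log (1 - s) := by
  rcases eq_or_ne s 0 with rfl | hs0
  · simp [logit]
  · exact log_div hs0 (sub_ne_zero.2 hs.symm)

lemma measurable_logit : Measurable logit := by
  unfold logit; fun_prop

lemma intervalIntegrable_logit (a b : ℝ) : IntervalIntegrable logit volume a b := by
  have hlog : IntervalIntegrable (fun s => log s - log (1 - s)) volume a b :=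
    intervalIntegral.intervalIntegrable_log'.sub <| by
      simpa using (intervalIntegral.intervalIntegrable_log' (a := 1 - a) (b := 1 - b)).comp_sub_left 1
  exact hlog.congr_ae <| ae_restrict_of_ae <|
    (Measure.ae_ne volume 1).mono fun s hs => (logit_eq_log_sub_log hs).symm

lemma continuousAt_logit {s : ℝ} (h0 : s ≠ 0) (h1 : s ≠ 1) : ContinuousAt logit s :=
  (continuousAt_id.div (continuousAt_const.sub continuousAt_id) (sub_ne_zero.2 h1.symm)).log
    (div_ne_zero h0 (sub_ne_zero.2 h1.symm))

lemma hasDerivAt_integral_logit (a : ℝ) {c : ℝ} (h0 : c ≠ 0) (h1 : c ≠ 1) :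
    HasDerivAt (fun u => ∫ t in a..u, logit t) (logit c) c :=
  intervalIntegral.integral_hasDerivAt_right (intervalIntegrable_logit a c)
    measurable_logit.aestronglyMeasurable.stronglyMeasurableAtFilter (continuousAt_logit h0 h1)

lemma hasDerivAt_integral_logit_sigmoid (a x : ℝ) :
    HasDerivAt (fun z => ∫ t in a..sigmoid z, logit t) (x * (sigmoid x * (1 - sigmoid x))) x := by
  have hFTC := hasDerivAt_integral_logit a (sigmoid_pos x).ne' (sigmoid_lt_one x).ne
  rw [logit_sigmoid] at hFTC
  exact hFTC.comp x (hasDerivAt_sigmoid x)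

section CoordinateUpdate

variable {𝕜 ι E : Type*} [NontriviallyNormedField 𝕜] [Fintype ι] [DecidableEq ι]
  [NormedAddCommGroup E] [NormedSpace 𝕜 E]

theorem HasFDerivAt.hasDerivAt_comp_apply_update {F : (ι → 𝕜) → E} {F' : (ι → 𝕜) →L[𝕜] E}
    {h : ι → 𝕜 → 𝕜} {x : ι → 𝕜} {i : ι} {h' : 𝕜}
    (hF : HasFDerivAt F F' (fun j => h j (x j))) (hh : HasDerivAt (h i) h' (x i)) :
    HasDerivAt (fun s => F (fun j => h j (update x i s j))) (h' • F' (Pi.single i 1)) (x i) := by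
  have hupd : HasDerivAt (fun s => update (fun j => h j (x j)) i (h i s))
      (h' • Pi.single i 1) (x i) :=
    (hasDerivAt_update (fun j => h j (x j)) i (h i (x i))).scomp (x i) hh
  replace hF : HasFDerivAt F F' (update (fun j => h j (x j)) i (h i (x i))) := by
    rwa [update_eq_self]
  simp only [apply_update h x i, ← map_smul]
  exact hF.comp_hasDerivAt (x i) hupd

theorem HasDerivAt.sum_apply_update {φ : ι → 𝕜 → E} {x : ι → 𝕜} {i : ι} {φ' : E}
    (hφ : HasDerivAt (φ i) φ' (x i)) :
    HasDerivAt (fun s => ∑ j, φ j (update x i s j)) φ' (x i) := by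
  simp only [apply_update φ, Finset.sum_update_of_mem (Finset.mem_univ i)]
  exact hφ.add_const _

end CoordinateUpdate

theorem lyapunov_partial_derivative_general (n : ℕ) (f : (Fin n → ℝ) → ℝ)
    (hf : ContDiff ℝ 1 f) (d lam θ : Fin n → ℝ)
    (g : ℝ → ℝ) (hg : ∀ z, g z = 1 / (1 + Real.exp (-z)))
    (L : (Fin n → ℝ) → ℝ)
    (hL : ∀ x, L x = f (fun i => g (lam i * x i)) +
      (∑ i, (d i / lam i) * ∫ s in (0:ℝ)..(g (lam i * x i)), Real.log (s / (1 - s))) -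
      ∑ i, θ i * g (lam i * x i)) :
    (∀ (x : Fin n → ℝ) (i : Fin n),
      HasDerivAt (fun s => L (Function.update x i s))
        (lam i * (g (lam i * x i) * (1 - g (lam i * x i))) *
          (d i * x i + fderiv ℝ f (fun j => g (lam j * x j)) (Pi.single i 1) - θ i))
        (x i)) ∧
    (∀ x : Fin n → ℝ,
      (∀ i, -d i * x i - fderiv ℝ f (fun j => g (lam j * x j)) (Pi.single i 1) + θ i = 0) →
      ∀ i, HasDerivAt (fun s => L (Function.update x i s)) 0 (x i)) := by
  obtain rfl : g = sigmoid := funext fun z => by rw [hg, one_div, sigmoid_def]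
  have partial_deriv (x : Fin n → ℝ) (i : Fin n) :
      HasDerivAt (fun s => L (update x i s))
        (lam i * (sigmoid (lam i * x i) * (1 - sigmoid (lam i * x i))) *
          (d i * x i + fderiv ℝ f (fun j => sigmoid (lam j * x j)) (Pi.single i 1) - θ i))
        (x i) := by
    have hscale : HasDerivAt (fun s => lam i * s) (lam i) (x i) := by
      simpa using (hasDerivAt_id (x i)).const_mul (lam i)
    have hσ := (hasDerivAt_sigmoid (lam i * x i)).comp (x i) hscale
    have hf_term := (hf.differentiable one_ne_zero _).hasFDerivAt.hasDerivAt_comp_apply_update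
      (h := fun j s => sigmoid (lam j * s)) hσ
    have hint_term := HasDerivAt.sum_apply_update
      (φ := fun j s => d j / lam j * ∫ t in (0:ℝ)..sigmoid (lam j * s), logit t)
      (((hasDerivAt_integral_logit_sigmoid 0 _).comp (x i) hscale).const_mul (d i / lam i))
    have hθ_term := HasDerivAt.sum_apply_update
      (φ := fun j s => θ j * sigmoid (lam j * s)) (hσ.const_mul (θ i))
    refine (((hf_term.add hint_term).sub hθ_term).congr_deriv ?_).congr_of_eventuallyEq
      (.of_forall fun s => hL _)
    rw [smul_eq_mul]
    -- `d i / lam i * lam i = d i` needs `lam i ≠ 0`; at `lam i = 0` both sides vanish anyway.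
    rcases eq_or_ne (lam i) 0 with hlam | hlam
    · simp [hlam]
    · field_simp
      ring
  refine ⟨partial_deriv, fun x hx i => ?_⟩
  have hcrit : d i * x i + fderiv ℝ f (fun j => sigmoid (lam j * x j)) (Pi.single i 1) - θ i = 0 := by
    linarith [hx i]
  simpa [hcrit] using partial_deriv x i

theorem lyapunov_partial_derivative (n : ℕ) (f : (Fin n → ℝ) → ℝ)
    (hf : ContDiff ℝ 1 f) (d lam θ : Fin n → ℝ)
    (hd : ∀ i, 0 < d i) (hlam : ∀ i, 0 < lam i)
    (g : ℝ → ℝ) (hg : ∀ z, g z = 1 / (1 + Real.exp (-z)))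
    (L : (Fin n → ℝ) → ℝ)
    (hL : ∀ x, L x = f (fun i => g (lam i * x i)) +
      (∑ i, (d i / lam i) * ∫ s in (0:ℝ)..(g (lam i * x i)), Real.log (s / (1 - s))) -
      ∑ i, θ i * g (lam i * x i)) :
    (∀ (x : Fin n → ℝ) (i : Fin n),
      HasDerivAt (fun s => L (Function.update x i s))
        (lam i * (g (lam i * x i) * (1 - g (lam i * x i))) *
          (d i * x i + fderiv ℝ f (fun j => g (lam j * x j)) (Pi.single i 1) - θ i))
        (x i)) ∧
    (∀ x : Fin n → ℝ,
      (∀ i, -d i * x i - fderiv ℝ f (fun j => g (lam j * x j)) (Pi.single i 1) + θ i = 0) →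
      ∀ i, HasDerivAt (fun s => L (Function.update x i s)) 0 (x i)) :=
  lyapunov_partial_derivative_general n f hf d lam θ g hg L hL
end
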